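/- Greedy contraction recursion: let F be a monotone submodular set function on subsets of a finite set P, let T ⊆ P with |T| ≤ K and K ≥ 1, and let S ⊆ P with T \ S nonempty. If s* ∈ P \ S maximizes the marginal gain F(S ∪ {s}) − F(S) over s ∈ P \ S, then F(T) − F(S ∪ {s*}) ≤ (1 − 1/K)·(F(T) − F(S)). -/

import Mathlib

/-- `F` is monotone on subsets of `P`. -/
def MonotoneOn' {α : Type*} (P : Finset α) (F : Finset α → ℝ) : Prop :=
  ∀ S T : Finset α, S ⊆ T → T ⊆ P → F S ≤ F T

/-- `F` is submodular on subsets of `P`. -/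
def SubmodularOn {α : Type*} [DecidableEq α] (P : Finset α) (F : Finset α → ℝ) : Prop :=
  ∀ A B : Finset α, A ⊆ B → B ⊆ P → ∀ s ∈ P, s ∉ B →
    F (insert s A) - F A ≥ F (insert s B) - F B

lemma telescope_bound {α : Type*} [DecidableEq α]
    (P : Finset α) (F : Finset α → ℝ) (hsub : SubmodularOn P F)
    (S : Finset α) (hSP : S ⊆ P) :
    ∀ R : Finset α, R ⊆ P → (∀ a ∈ R, a ∉ S) →
      F (S ∪ R) - F S ≤ ∑ t ∈ R, (F (insert t S) - F S) := by
  intro R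
  induction R using Finset.induction_on with
  | empty => intro _ _; simp
  | @insert a R haR ih =>
    intro hRP hdisj
    have hRP' : R ⊆ P := fun x hx => hRP (Finset.mem_insert_of_mem hx)
    have haP : a ∈ P := hRP (Finset.mem_insert_self a R)
    have haSR : a ∉ S ∪ R := by
      simp only [Finset.mem_union]
      push_neg
      exact ⟨hdisj a (Finset.mem_insert_self a R), haR⟩
    have hsubm := hsub S (S ∪ R) Finset.subset_union_left
      (Finset.union_subset hSP hRP') a haP haSR
    have ih' := ih hRP' (fun x hx => hdisj x (Finset.mem_insert_of_mem hx))
    rw [Finset.sum_insert haR]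
    have : S ∪ insert a R = insert a (S ∪ R) := by
      ext x; simp [Finset.mem_insert, Finset.mem_union, or_left_comm]
    rw [this]
    linarith

/-- Greedy contraction recursion: one greedy step contracts the optimality gap by
a factor of `1 - 1/K`. -/
theorem greedy_contraction {α : Type*} [DecidableEq α]
    (P : Finset α) (F : Finset α → ℝ)
    (hmono : MonotoneOn' P F) (hsub : SubmodularOn P F)
    (K : ℕ) (hK : 1 ≤ K)
    (T : Finset α) (hTP : T ⊆ P) (hTcard : T.card ≤ K)
    (S : Finset α) (hSP : S ⊆ P) (hTS : (T \ S).Nonempty)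
    (sstar : α) (hstar : sstar ∈ P) (hstarS : sstar ∉ S)
    (hmax : ∀ s ∈ P, s ∉ S → F (insert s S) - F S ≤ F (insert sstar S) - F S) :
    F T - F (insert sstar S) ≤ (1 - 1 / (K : ℝ)) * (F T - F S) := by
  set g : ℝ := F (insert sstar S) - F S with hg
  have hRP : T \ S ⊆ P := fun x hx => hTP (Finset.mem_sdiff.mp hx).1
  have hdisj : ∀ a ∈ T \ S, a ∉ S := fun a ha => (Finset.mem_sdiff.mp ha).2
  have htel := telescope_bound P F hsub S hSP (T \ S) hRP hdisj
  have hST : S ∪ (T \ S) = S ∪ T := by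
    ext x; simp [Finset.mem_union, Finset.mem_sdiff]
  have hFT : F T ≤ F (S ∪ (T \ S)) := by
    rw [hST]
    exact hmono T (S ∪ T) Finset.subset_union_right (Finset.union_subset hSP hTP)
  have hsum : ∑ t ∈ T \ S, (F (insert t S) - F S) ≤ (T \ S).card * g := by
    rw [← nsmul_eq_mul]
    apply Finset.sum_le_card_nsmul
    intro t ht
    exact hmax t (hRP ht) (hdisj t ht)
  have hgnonneg : 0 ≤ g := by
    have := hmono S (insert sstar S) (Finset.subset_insert _ _)
      (Finset.insert_subset hstar hSP)
    linarith
  have hcard : ((T \ S).card : ℝ) ≤ (K : ℝ) := by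
    exact_mod_cast le_trans (Finset.card_le_card (Finset.sdiff_subset)) hTcard
  have hKg : F T - F S ≤ (K : ℝ) * g := by
    have : ((T \ S).card : ℝ) * g ≤ (K : ℝ) * g :=
      mul_le_mul_of_nonneg_right hcard hgnonneg
    linarith
  have hKpos : (0 : ℝ) < (K : ℝ) := by exact_mod_cast hK
  have hdiv : (F T - F S) / (K : ℝ) ≤ g := by
    rw [div_le_iff₀ hKpos]
    linarith [hKg]
  have : F T - F (insert sstar S) = (F T - F S) - g := by rw [hg]; ring
  rw [this]
  have h1 : (1 - 1 / (K : ℝ)) * (F T - F S) = (F T - F S) - (F T - F S) / (K : ℝ) := by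
    field_simp
  rw [h1]
  linarith
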